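/- The number of natural numbers n ≤ x whose square-free kernel s(n) satisfies s(n) ≤ n^(1/2+ε) is O(x^(3/4+ε/2)). -/

import Mathlib

/-- The largest `m` such that `m^2` divides `n`. -/
noncomputable def maxSqDiv (n : ℕ) : ℕ := Nat.findGreatest (fun m => m ^ 2 ∣ n) n

/-- The square-free kernel of `n`: `n / m^2` where `m^2` is the largest square dividing `n`. -/
noncomputable def sker (n : ℕ) : ℕ := n / (maxSqDiv n) ^ 2

/-!
Write `n = s(n) m²`. For a fixed value `s` of the kernel, `n ≤ N` leaves at most `√(N / s)`
choices of `m`, so the number of `n ≤ N` with `s(n) ≤ S` is at most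
`∑_{s ≤ S} √(N / s) ≤ 2 √(N S)`. Taking `N = x` and `S = x^(1/2+ε)` gives `2 x^(3/4+ε/2)`.
-/

open Finset

lemma maxSqDiv_sq_dvd (n : ℕ) : maxSqDiv n ^ 2 ∣ n := by
  rcases Nat.eq_zero_or_pos n with rfl | hn
  · simp
  · exact Nat.findGreatest_spec (P := fun m => m ^ 2 ∣ n) hn (by simp)

lemma sker_mul_maxSqDiv_sq (n : ℕ) : sker n * maxSqDiv n ^ 2 = n :=
  Nat.div_mul_cancel (maxSqDiv_sq_dvd n)

lemma one_le_maxSqDiv {n : ℕ} (hn : 1 ≤ n) : 1 ≤ maxSqDiv n :=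
  Nat.le_findGreatest hn (by simp)

lemma sker_pos {n : ℕ} (hn : 1 ≤ n) : 0 < sker n := by
  refine Nat.pos_of_ne_zero fun h => ?_
  have := sker_mul_maxSqDiv_sq n
  rw [h, zero_mul] at this
  omega

lemma card_sker_eq_le_sqrt (N s : ℕ) (hs : 1 ≤ s) :
    #{n ∈ Icc 1 N | sker n = s} ≤ Nat.sqrt (N / s) := by
  have hn_eq : ∀ n, sker n = s → n = s * maxSqDiv n ^ 2 := fun n h => by
    rw [← h, sker_mul_maxSqDiv_sq]
  simpa using card_le_card_of_injOn (t := Icc 1 (Nat.sqrt (N / s))) maxSqDiv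
    (fun n hn => by
      simp only [coe_filter, mem_Icc, Set.mem_ofPred_eq] at hn
      obtain ⟨⟨hn1, hnN⟩, hsn⟩ := hn
      refine mem_Icc.2 ⟨one_le_maxSqDiv hn1, Nat.le_sqrt.2 ((Nat.le_div_iff_mul_le hs).2 ?_)⟩
      nlinarith [hn_eq n hsn])
    (fun a ha b hb hab => by
      simp only [coe_filter, Set.mem_ofPred_eq] at ha hb
      rw [hn_eq a ha.2, hn_eq b hb.2, hab])

lemma natSqrt_div_le_sqrt_div (N s : ℕ) : (Nat.sqrt (N / s) : ℝ) ≤ √N / √s := by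
  rw [← Real.sqrt_div' _ (Nat.cast_nonneg s)]
  calc (Nat.sqrt (N / s) : ℝ) ≤ √((N / s : ℕ) : ℝ) :=
        Real.le_sqrt_of_sq_le (by exact_mod_cast Nat.sqrt_le' (N / s))
    _ ≤ √(N / s) := Real.sqrt_le_sqrt Nat.cast_div_le

lemma sum_inv_sqrt_le (S : ℕ) : ∑ s ∈ Icc 1 S, (√s)⁻¹ ≤ 2 * √S := by
  induction S with
  | zero => simp
  | succ S ih =>
    rw [sum_Icc_succ_top (by omega)]
    have hS := Real.sq_sqrt (Nat.cast_nonneg (α := ℝ) S)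
    have hS1 := Real.sq_sqrt (by positivity : (0 : ℝ) ≤ S + 1)
    have hpos : 0 < √((S : ℝ) + 1) := Real.sqrt_pos.2 (by positivity)
    -- `1 / √(S+1) ≤ 2 (√(S+1) - √S)`, i.e. `2 √S √(S+1) ≤ 2S + 1`
    have step : (√((S : ℝ) + 1))⁻¹ ≤ 2 * √((S : ℝ) + 1) - 2 * √S := by
      rw [inv_le_iff_one_le_mul₀ hpos]
      nlinarith [sq_nonneg (√((S : ℝ) + 1) - √S)]
    push_cast
    linarith

lemma card_sker_le (N S : ℕ) : (#{n ∈ Icc 1 N | sker n ≤ S} : ℝ) ≤ 2 * √N * √S := by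
  have hsub : {n ∈ Icc 1 N | sker n ≤ S} ⊆ (Icc 1 S).biUnion fun s => {n ∈ Icc 1 N | sker n = s} :=
    fun n hn => by
      simp only [mem_filter, mem_Icc] at hn
      exact mem_biUnion.2 ⟨sker n, mem_Icc.2 ⟨sker_pos hn.1.1, hn.2⟩, by simp [hn.1]⟩
  calc (#{n ∈ Icc 1 N | sker n ≤ S} : ℝ)
      ≤ ∑ s ∈ Icc 1 S, (#{n ∈ Icc 1 N | sker n = s} : ℝ) := by
        exact_mod_cast (card_le_card hsub).trans card_biUnion_le
    _ ≤ ∑ s ∈ Icc 1 S, √N * (√s)⁻¹ := sum_le_sum fun s hs => by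
        rw [← div_eq_mul_inv]
        exact (Nat.cast_le.2 (card_sker_eq_le_sqrt N s (mem_Icc.1 hs).1)).trans
          (natSqrt_div_le_sqrt_div N s)
    _ ≤ 2 * √N * √S := by
        rw [← mul_sum, mul_assoc, mul_left_comm]
        exact mul_le_mul_of_nonneg_left (sum_inv_sqrt_le S) (by positivity)

theorem stmt1 (ε : ℝ) (hε : 0 < ε) :
    ∃ C : ℝ, 0 < C ∧ ∀ x : ℝ, 1 ≤ x →
      (((Finset.Icc 1 ⌊x⌋₊).filter
        (fun n => (sker n : ℝ) ≤ (n : ℝ) ^ ((1 : ℝ) / 2 + ε))).card : ℝ)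
        ≤ C * x ^ ((3 : ℝ) / 4 + ε / 2) := by
  refine ⟨2, two_pos, fun x hx => ?_⟩
  have hx0 : 0 ≤ x := zero_le_one.trans hx
  set y := x ^ ((1 : ℝ) / 2 + ε)
  have hsker_le : ∀ n ∈ Icc 1 ⌊x⌋₊, (sker n : ℝ) ≤ (n : ℝ) ^ ((1 : ℝ) / 2 + ε) → sker n ≤ ⌊y⌋₊ :=
    fun n hn h => Nat.le_floor <| h.trans <| Real.rpow_le_rpow (Nat.cast_nonneg n)
      ((Nat.cast_le.2 (mem_Icc.1 hn).2).trans (Nat.floor_le hx0)) (by positivity)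
  calc _ ≤ (#{n ∈ Icc 1 ⌊x⌋₊ | sker n ≤ ⌊y⌋₊} : ℝ) :=
        Nat.cast_le.2 (card_le_card (monotone_filter_right _ hsker_le))
    _ ≤ 2 * √(⌊x⌋₊ : ℝ) * √(⌊y⌋₊ : ℝ) := card_sker_le _ _
    _ ≤ 2 * √x * √y := by gcongr <;> exact Nat.floor_le (by positivity)
    _ = 2 * x ^ ((3 : ℝ) / 4 + ε / 2) := by
        rw [mul_assoc, ← Real.sqrt_mul hx0, Real.sqrt_eq_rpow, ← Real.rpow_one_add' hx0 (by positivity),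
          ← Real.rpow_mul hx0]
        ring_nf
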